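/- The sum Σ_{q=1}^∞ (6/π²)·(1/q)·∏_{p | q} 1/(p+1) over all positive integers q equals 1. -/

import Mathlib

/-!
The summand is `6 / π²` times the nonnegative multiplicative function
`w q = q⁻¹ ∏_{p ∣ q} (p + 1)⁻¹`, whose Euler factor at `p` is
`1 + (p + 1)⁻¹ ∑_{m ≥ 1} p⁻ᵐ = 1 + 1 / (p² - 1) = (1 - p⁻²)⁻¹`, the Euler factor of
`∑ 1 / n² = π² / 6`. Two nonnegative multiplicative functions with equal Euler factors have
equal sums once one of them is summable: the partial sums of the other are bounded by its sums
over smooth numbers, which are finite products of Euler factors, and then the two Euler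
products agree.
-/

open Finset

section EulerFactors

variable {f g : ℕ → ℝ}

lemma sum_range_le_tsum_smoothNumbers (hf : ∀ n, 0 ≤ f n) (hf₀ : f 0 = 0) {N : ℕ}
    (hs : Summable fun m : N.smoothNumbers ↦ f m) :
    ∑ i ∈ range N, f i ≤ ∑' m : N.smoothNumbers, f m := by
  have hind : ∀ i ∈ range N, f i = N.smoothNumbers.indicator f i := by
    intro i hi
    rcases i.eq_zero_or_pos with rfl | hpos
    · simp [Set.indicator_apply, hf₀]
    · exact (Set.indicator_of_mem (Nat.mem_smoothNumbers_of_lt hpos (mem_range.mp hi)) f).symm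
  rw [sum_congr rfl hind, _root_.tsum_subtype]
  exact (summable_subtype_iff_indicator.mp hs).sum_le_tsum _
    fun i _ ↦ Set.indicator_nonneg (fun n _ ↦ hf n) i

theorem hasSum_of_tsum_prime_pow_eq (hf : ∀ n, 0 ≤ f n) (hf₀ : f 0 = 0) (hf₁ : f 1 = 1)
    (hfmul : ∀ {m n}, m.Coprime n → f (m * n) = f m * f n)
    (hfp : ∀ {p}, p.Prime → Summable fun e ↦ f (p ^ e))
    (hg : ∀ n, 0 ≤ g n) (hg₀ : g 0 = 0) (hg₁ : g 1 = 1)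
    (hgmul : ∀ {m n}, m.Coprime n → g (m * n) = g m * g n)
    (hfg : ∀ {p}, p.Prime → ∑' e, f (p ^ e) = ∑' e, g (p ^ e)) {a : ℝ} (hga : HasSum g a) :
    HasSum f a := by
  have hfp_norm {p : ℕ} (hp : p.Prime) : Summable fun e ↦ ‖f (p ^ e)‖ := by
    simpa only [Real.norm_of_nonneg (hf _)] using hfp hp
  have hg_norm : Summable (‖g ·‖) := hga.summable.norm
  have hgp_norm {p : ℕ} (hp : p.Prime) : Summable fun e ↦ ‖g (p ^ e)‖ :=
    hg_norm.comp_injective (Nat.pow_right_injective hp.one_lt)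
  have hfs : Summable f := by
    refine summable_of_sum_range_le (c := a) hf fun N ↦ ?_
    have hF := (EulerProduct.summable_and_hasSum_smoothNumbers_prod_primesBelow_tsum
      hf₁ hfmul hfp_norm N).2
    have hG := (EulerProduct.summable_and_hasSum_smoothNumbers_prod_primesBelow_tsum
      hg₁ hgmul hgp_norm N).2
    calc ∑ i ∈ range N, f i ≤ ∑' m : N.smoothNumbers, f m :=
          sum_range_le_tsum_smoothNumbers hf hf₀ hF.summable
      _ = ∏ p ∈ N.primesBelow, ∑' e, g (p ^ e) := by
          rw [hF.tsum_eq]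
          exact prod_congr rfl fun p hp ↦ hfg (Nat.prime_of_mem_primesBelow hp)
      _ = ∑' m : N.smoothNumbers, g m := hG.tsum_eq.symm
      _ ≤ a := hga.tsum_eq ▸ hga.summable.tsum_subtype_le g _ hg
  have hf_norm : Summable (‖f ·‖) := by simpa only [Real.norm_of_nonneg (hf _)] using hfs
  rw [hfs.hasSum_iff, ← hga.tsum_eq, ← EulerProduct.eulerProduct_tprod hf₁ hfmul hf_norm hf₀,
    ← EulerProduct.eulerProduct_tprod hg₁ hgmul hg_norm hg₀]
  exact tprod_congr fun p ↦ hfg p.prop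

end EulerFactors

noncomputable def primeFactorsWeight (q : ℕ) : ℝ :=
  (1 / (q : ℝ)) * ∏ p ∈ q.primeFactors, (1 : ℝ) / (p + 1)

namespace primeFactorsWeight

lemma nonneg (q : ℕ) : 0 ≤ primeFactorsWeight q :=
  mul_nonneg (by positivity) (prod_nonneg fun _ _ ↦ by positivity)

lemma map_zero : primeFactorsWeight 0 = 0 := by simp [primeFactorsWeight]

lemma map_one : primeFactorsWeight 1 = 1 := by simp [primeFactorsWeight]

lemma map_mul {m n : ℕ} (h : m.Coprime n) :
    primeFactorsWeight (m * n) = primeFactorsWeight m * primeFactorsWeight n := by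
  rcases eq_or_ne m 0 with rfl | hm
  · simp [primeFactorsWeight]
  rcases eq_or_ne n 0 with rfl | hn
  · simp [primeFactorsWeight]
  unfold primeFactorsWeight
  rw [Nat.primeFactors_mul hm hn, prod_union h.disjoint_primeFactors, Nat.cast_mul]
  ring

lemma map_prime_pow_succ {p : ℕ} (hp : p.Prime) (e : ℕ) :
    primeFactorsWeight (p ^ (e + 1)) = ((p + 1 : ℝ)⁻¹ * (p : ℝ)⁻¹) * (p : ℝ)⁻¹ ^ e := by
  rw [primeFactorsWeight, Nat.primeFactors_prime_pow e.succ_ne_zero hp]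
  push_cast
  rw [prod_singleton]
  ring

lemma hasSum_prime_pow {p : ℕ} (hp : p.Prime) :
    HasSum (fun e ↦ primeFactorsWeight (p ^ e)) (1 - ((p : ℝ) ^ 2)⁻¹)⁻¹ := by
  have hp1 : (1 : ℝ) < p := by exact_mod_cast hp.one_lt
  have hgeom : HasSum (fun e ↦ primeFactorsWeight (p ^ (e + 1)))
      ((p + 1 : ℝ)⁻¹ * (p : ℝ)⁻¹ * (1 - (p : ℝ)⁻¹)⁻¹) := by
    simpa only [map_prime_pow_succ hp] using
      (hasSum_geometric_of_lt_one (by positivity) (inv_lt_one_of_one_lt₀ hp1)).mul_left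
        ((p + 1 : ℝ)⁻¹ * (p : ℝ)⁻¹)
  have hfactor :
      (1 - ((p : ℝ) ^ 2)⁻¹)⁻¹ = 1 + (p + 1 : ℝ)⁻¹ * (p : ℝ)⁻¹ * (1 - (p : ℝ)⁻¹)⁻¹ := by
    have : (p : ℝ) - 1 ≠ 0 := by linarith
    have : (p : ℝ) ^ 2 - 1 ≠ 0 := by nlinarith
    field_simp
    ring
  simpa only [pow_zero, map_one, hfactor] using
    hgeom.zero_add (f := fun e ↦ primeFactorsWeight (p ^ e))

end primeFactorsWeight

lemma hasSum_one_div_sq_pow {n : ℕ} (hn : 1 < n) :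
    HasSum (fun e ↦ 1 / ((n ^ e : ℕ) : ℝ) ^ 2) (1 - ((n : ℝ) ^ 2)⁻¹)⁻¹ := by
  have hn1 : (1 : ℝ) < n ^ 2 := by exact_mod_cast Nat.one_lt_pow two_ne_zero hn
  convert hasSum_geometric_of_lt_one (by positivity) (inv_lt_one_of_one_lt₀ hn1) using 2 with e
  rw [Nat.cast_pow, one_div, ← pow_mul, mul_comm, pow_mul, inv_pow]

theorem hasSum_primeFactorsWeight : HasSum primeFactorsWeight (Real.pi ^ 2 / 6) := by
  refine hasSum_of_tsum_prime_pow_eq primeFactorsWeight.nonneg primeFactorsWeight.map_zero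
    primeFactorsWeight.map_one primeFactorsWeight.map_mul
    (fun hp ↦ (primeFactorsWeight.hasSum_prime_pow hp).summable) (fun n ↦ by positivity)
    (by simp) (by simp) (fun {m n} _ ↦ by simp only [Nat.cast_mul, mul_pow, one_div, mul_inv])
    (fun hp ↦ ?_) hasSum_zeta_two
  rw [(primeFactorsWeight.hasSum_prime_pow hp).tsum_eq, (hasSum_one_div_sq_pow hp.one_lt).tsum_eq]

theorem stmt8 :
    ∑' q : ℕ, (6 / Real.pi ^ 2) * (1 / (q : ℝ)) * ∏ p ∈ q.primeFactors, (1 : ℝ) / (p + 1)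
      = 1 := by
  simp_rw [mul_assoc]
  rw [tsum_mul_left]
  change 6 / Real.pi ^ 2 * ∑' q, primeFactorsWeight q = 1
  rw [hasSum_primeFactorsWeight.tsum_eq]
  field_simp
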